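/- Let v₀ > -1, u₀(ξ) = √(1+v₀) tanh(√((1+v₀)/2)ξ), H₀ ∈ ℝ, and u_in(ξ) = (u₀(ξ) + ξu₀'(ξ))/(2(1+v₀)). Then ∫_{-∞}^{∞} { 2[2u₀²(ξ) - 1 - v₀]·u₀(ξ)·u_in(ξ) - u₀²(ξ) } dξ = -√2·√(1+v₀). -/

import Mathlib

open Real MeasureTheory

open Filter Topology


lemma myTanh_eq (x : ℝ) : Real.tanh x = 1 - 2 / (Real.exp (2*x) + 1) := by
  have h1 : (0:ℝ) < Real.exp x := Real.exp_pos x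
  have h2 : (0:ℝ) < Real.exp (2*x) + 1 := by positivity
  rw [Real.tanh_eq_sinh_div_cosh, Real.sinh_eq, Real.cosh_eq, Real.exp_neg, two_mul,
    Real.exp_add]
  field_simp
  ring

lemma myHasDerivAt_tanh (x : ℝ) : HasDerivAt Real.tanh (1 - Real.tanh x ^ 2) x := by
  have hc : Real.cosh x ≠ 0 := (Real.cosh_pos x).ne'
  have h := (Real.hasDerivAt_sinh x).div (Real.hasDerivAt_cosh x) hc
  have hid : Real.cosh x ^ 2 - Real.sinh x ^ 2 = 1 := Real.cosh_sq_sub_sinh_sq x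
  have : (Real.cosh x * Real.cosh x - Real.sinh x * Real.sinh x) / Real.cosh x ^ 2
      = 1 - Real.tanh x ^ 2 := by
    rw [Real.tanh_eq_sinh_div_cosh]
    field_simp
  rw [this] at h
  exact h.congr_of_eventuallyEq (by filter_upwards with y using (Real.tanh_eq_sinh_div_cosh y))

lemma myContinuous_tanh : Continuous Real.tanh :=
  continuous_iff_continuousAt.mpr fun x => (myHasDerivAt_tanh x).continuousAt

lemma myTanh_sq_le_one (x : ℝ) : Real.tanh x ^ 2 ≤ 1 := by
  have hc : 0 < Real.cosh x := Real.cosh_pos x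
  have hid : Real.cosh x ^ 2 - Real.sinh x ^ 2 = 1 := Real.cosh_sq_sub_sinh_sq x
  rw [Real.tanh_eq_sinh_div_cosh, div_pow, div_le_one (by positivity)]
  nlinarith

lemma myOne_sub_tanh_sq (x : ℝ) : 1 - Real.tanh x ^ 2 ≤ 4 * Real.exp (-x) ^ 2 := by
  have hc : 0 < Real.cosh x := Real.cosh_pos x
  have hid : Real.cosh x ^ 2 - Real.sinh x ^ 2 = 1 := Real.cosh_sq_sub_sinh_sq x
  have hhalf : Real.exp x / 2 ≤ Real.cosh x := by
    rw [Real.cosh_eq]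
    have := (Real.exp_pos (-x)).le
    linarith
  have hx : 0 < Real.exp x := Real.exp_pos x
  have h1 : 1 - Real.tanh x ^ 2 = 1 / Real.cosh x ^ 2 := by
    rw [Real.tanh_eq_sinh_div_cosh, div_pow]
    field_simp
    exact hid
  rw [h1, Real.exp_neg]
  rw [div_le_iff₀ (by positivity)]
  have h4 : Real.exp x ^ 2 / 4 ≤ Real.cosh x ^ 2 := by nlinarith
  have : (Real.exp x)⁻¹ ^ 2 = 1 / Real.exp x ^ 2 := by
    field_simp
  rw [this]
  have he2 : 0 < Real.exp x ^ 2 := by positivity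
  have : 4 * (1 / Real.exp x ^ 2) * Real.cosh x ^ 2
      = 4 * Real.cosh x ^ 2 / Real.exp x ^ 2 := by ring
  rw [this, le_div_iff₀ he2]
  nlinarith

lemma myTendsto_tanh_atTop : Tendsto Real.tanh atTop (𝓝 1) := by
  have h : Tendsto (fun x : ℝ => 1 - 2 / (Real.exp (2*x) + 1)) atTop (𝓝 (1 - 0)) := by
    apply Tendsto.const_sub
    apply Tendsto.div_atTop tendsto_const_nhds
    exact (Real.tendsto_exp_atTop.comp (tendsto_id.const_mul_atTop two_pos)).atTop_add
      tendsto_const_nhds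
  simpa [myTanh_eq] using h.congr fun x => (myTanh_eq x).symm

lemma myTendsto_tanh_atBot : Tendsto Real.tanh atBot (𝓝 (-1)) := by
  have h : Tendsto (fun x : ℝ => -Real.tanh (-x)) atBot (𝓝 (-1)) := by
    exact (myTendsto_tanh_atTop.comp tendsto_neg_atBot_atTop).neg
  exact h.congr fun x => by rw [Real.tanh_neg, neg_neg]

lemma myTendsto_mul_exp {k : ℝ} (hk : 0 < k) :
    Tendsto (fun x : ℝ => x * Real.exp (-(k*x))) atTop (𝓝 0) := by
  have h := (tendsto_pow_mul_exp_neg_atTop_nhds_zero 1).comp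
    (tendsto_id.const_mul_atTop hk)
  have h2 := h.div_const k
  simp only [Function.comp_def, pow_one, zero_div] at h2
  refine h2.congr fun x => ?_
  field_simp
  ring_nf
  simp [mul_comm]


lemma myHasDerivAt_tanh_comp (a ξ : ℝ) :
    HasDerivAt (fun ξ => Real.tanh (a*ξ)) ((1 - Real.tanh (a*ξ) ^ 2) * a) ξ := by
  have inner : HasDerivAt (fun ξ : ℝ => a * ξ) a ξ := by
    simpa using (hasDerivAt_id ξ).const_mul a
  exact (myHasDerivAt_tanh (a*ξ)).comp ξ inner

lemma myTendsto_term1_atTop {a : ℝ} (ha : 0 < a) :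
    Tendsto (fun ξ : ℝ => ξ * (Real.tanh (a*ξ)^4 - Real.tanh (a*ξ)^2) / 2) atTop (𝓝 0) := by
  have hb : Tendsto (fun ξ : ℝ => 2 * (ξ * Real.exp (-(a*ξ)) ^ 2)) atTop (𝓝 0) := by
    have h := (myTendsto_mul_exp (by positivity : (0:ℝ) < 2*a)).const_mul 2
    rw [mul_zero] at h
    refine h.congr fun ξ => ?_
    rw [pow_two, ← Real.exp_add]
    ring_nf
  apply squeeze_zero_norm' _ hb
  filter_upwards [eventually_ge_atTop (0:ℝ)] with ξ hξ
  set T := Real.tanh (a*ξ) with hT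
  have h1 := myTanh_sq_le_one (a*ξ)
  have h2 := myOne_sub_tanh_sq (a*ξ)
  have hC : T^4 ≤ T^2 := by nlinarith [sq_nonneg T]
  have hA : T^2 - T^4 ≤ 4 * Real.exp (-(a*ξ))^2 := by nlinarith [sq_nonneg (1 - T^2)]
  have hB : ξ * (T^2 - T^4) ≤ ξ * (4 * Real.exp (-(a*ξ))^2) :=
    mul_le_mul_of_nonneg_left hA hξ
  have habs : |ξ * (T^4 - T^2) / 2| = ξ * (T^2 - T^4) / 2 := by
    rw [abs_of_nonpos (by nlinarith)]; ring
  rw [Real.norm_eq_abs, habs]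
  linarith

lemma myTendsto_term1_atBot {a : ℝ} (ha : 0 < a) :
    Tendsto (fun ξ : ℝ => ξ * (Real.tanh (a*ξ)^4 - Real.tanh (a*ξ)^2) / 2) atBot (𝓝 0) := by
  have hb0 : Tendsto (fun ξ : ℝ => 2 * (ξ * Real.exp (-(a*ξ)) ^ 2)) atTop (𝓝 0) := by
    have h := (myTendsto_mul_exp (by positivity : (0:ℝ) < 2*a)).const_mul 2
    rw [mul_zero] at h
    refine h.congr fun ξ => ?_
    rw [pow_two, ← Real.exp_add]
    ring_nf
  have hb : Tendsto (fun ξ : ℝ => 2 * ((-ξ) * Real.exp (a*ξ) ^ 2)) atBot (𝓝 0) := by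
    have := hb0.comp tendsto_neg_atBot_atTop
    refine this.congr fun ξ => ?_
    simp only [Function.comp_apply, mul_neg, neg_neg]
  apply squeeze_zero_norm' _ hb
  filter_upwards [eventually_le_atBot (0:ℝ)] with ξ hξ
  set T := Real.tanh (a*ξ) with hT
  have h1 := myTanh_sq_le_one (a*ξ)
  have h2 : 1 - T^2 ≤ 4 * Real.exp (a*ξ)^2 := by
    have := myOne_sub_tanh_sq (-(a*ξ))
    rw [Real.tanh_neg, neg_neg] at this
    simpa using this
  have hC : T^4 ≤ T^2 := by nlinarith [sq_nonneg T]
  have hA : T^2 - T^4 ≤ 4 * Real.exp (a*ξ)^2 := by nlinarith [sq_nonneg (1 - T^2)]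
  have hB : (-ξ) * (T^2 - T^4) ≤ (-ξ) * (4 * Real.exp (a*ξ)^2) :=
    mul_le_mul_of_nonneg_left hA (by linarith)
  have habs : |ξ * (T^4 - T^2) / 2| = (-ξ) * (T^2 - T^4) / 2 := by
    rw [abs_of_nonneg (by nlinarith)]; ring
  rw [Real.norm_eq_abs, habs]
  linarith

lemma myIntegrable {a : ℝ} (ha : 0 < a) :
    Integrable (fun ξ : ℝ => (1 - Real.tanh (a*ξ)^2) *
      (a*ξ*(2*Real.tanh (a*ξ)^3 - Real.tanh (a*ξ)) - 2*Real.tanh (a*ξ)^2)) := by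
  set g : ℝ → ℝ := fun ξ => (1 - Real.tanh (a*ξ)^2) *
      (a*ξ*(2*Real.tanh (a*ξ)^3 - Real.tanh (a*ξ)) - 2*Real.tanh (a*ξ)^2) with hg
  have hT : Continuous fun ξ : ℝ => Real.tanh (a*ξ) :=
    myContinuous_tanh.comp (continuous_const.mul continuous_id)
  have hcont : Continuous g :=
    (continuous_const.sub (hT.pow 2)).mul
      (((continuous_const.mul continuous_id).mul
        ((continuous_const.mul (hT.pow 3)).sub hT)).sub (continuous_const.mul (hT.pow 2)))
  have hsymm : (norm ∘ g) =ᵐ[volume] (norm ∘ g ∘ Neg.neg) := by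
    refine Filter.Eventually.of_forall fun x => ?_
    have : g (-x) = g x := by
      simp only [hg, mul_neg, neg_mul, Real.tanh_neg]
      ring
    simp [Function.comp, this]
  have he : Tendsto (fun x : ℝ => Real.exp (-(a*x))) atTop (𝓝 0) :=
    Real.tendsto_exp_atBot.comp (tendsto_neg_atTop_atBot.comp (tendsto_id.const_mul_atTop ha))
  have hBtend : Tendsto (fun x : ℝ => 12*a*(x * Real.exp (-(a*x))) + 8 * Real.exp (-(a*x)))
      atTop (𝓝 0) := by
    have := ((myTendsto_mul_exp ha).const_mul (12*a)).add (he.const_mul 8)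
    simpa using this
  have ho : g =O[atTop] fun x : ℝ => Real.exp (-(a*x)) := by
    rw [Asymptotics.isBigO_iff]
    refine ⟨1, ?_⟩
    filter_upwards [eventually_ge_atTop (0:ℝ),
      hBtend.eventually_le_const (by norm_num : (0:ℝ) < 1)] with x hx hB
    set T := Real.tanh (a*x) with hTdef
    set e := Real.exp (-(a*x)) with hedef
    have he0 : 0 < e := Real.exp_pos _
    have h1 : T^2 ≤ 1 := myTanh_sq_le_one (a*x)
    have h2 : 1 - T^2 ≤ 4 * e^2 := myOne_sub_tanh_sq (a*x)
    have haT : |T| ≤ 1 := by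
      rw [abs_le]; constructor <;> nlinarith [sq_nonneg (T+1), sq_nonneg (T-1)]
    have hax : 0 ≤ a * x := mul_nonneg ha.le hx
    have h3 : |a*x*(2*T^3 - T) - 2*T^2| ≤ 3*(a*x) + 2 := by
      have hu : -1 ≤ T := neg_le_of_abs_le haT
      have hv : T ≤ 1 := le_of_abs_le haT
      rw [abs_le]
      constructor <;> nlinarith [mul_nonneg (sub_nonneg.mpr hv) (sq_nonneg T),
        mul_nonneg (by linarith : (0:ℝ) ≤ 1 + T) (sq_nonneg T),
        mul_nonneg hax (mul_nonneg (sub_nonneg.mpr hv) (sq_nonneg T)),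
        mul_nonneg hax (mul_nonneg (by linarith : (0:ℝ) ≤ 1 + T) (sq_nonneg T))]
    have hBval : 12*a*(x*e) + 8*e ≤ 1 := hB
    have hg0 : 0 ≤ 1 - T^2 := by linarith
    calc ‖g x‖ = (1 - T^2) * |a*x*(2*T^3 - T) - 2*T^2| := by
          rw [Real.norm_eq_abs, hg, abs_mul, abs_of_nonneg hg0]
      _ ≤ (4*e^2) * (3*(a*x) + 2) := by
          apply mul_le_mul h2 h3 (abs_nonneg _) (by positivity)
      _ = (12*a*(x*e) + 8*e) * e := by ring
      _ ≤ 1 * e := mul_le_mul_of_nonneg_right hBval he0.le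
      _ = 1 * ‖Real.exp (-(a*x))‖ := by rw [Real.norm_eq_abs, abs_of_pos he0]
  have hg_int : IntegrableAtFilter (fun x : ℝ => Real.exp (-(a*x))) atTop volume :=
    ⟨Set.Ioi 0, Ioi_mem_atTop 0, by simpa [neg_mul] using exp_neg_integrableOn_Ioi 0 ha⟩
  exact (hcont.locallyIntegrable).integrable_of_isBigO_atTop_of_norm_isNegInvariant hsymm ho hg_int

lemma myMainIntegral {a : ℝ} (ha : 0 < a) :
    ∫ ξ : ℝ, (1 - Real.tanh (a*ξ)^2) *
      (a*ξ*(2*Real.tanh (a*ξ)^3 - Real.tanh (a*ξ)) - 2*Real.tanh (a*ξ)^2) = -(1/a) := by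
  have hderiv : ∀ ξ : ℝ, HasDerivAt
      (fun ξ => ξ * (Real.tanh (a*ξ)^4 - Real.tanh (a*ξ)^2) / 2 - Real.tanh (a*ξ)^3 / (2*a))
      ((1 - Real.tanh (a*ξ)^2) *
        (a*ξ*(2*Real.tanh (a*ξ)^3 - Real.tanh (a*ξ)) - 2*Real.tanh (a*ξ)^2)) ξ := by
    intro ξ
    have ht := myHasDerivAt_tanh_comp a ξ
    have H := (((hasDerivAt_id ξ).mul ((ht.pow 4).sub (ht.pow 2))).div_const 2).sub
      ((ht.pow 3).div_const (2*a))
    refine (H.congr_of_eventuallyEq (Filter.Eventually.of_forall fun y => rfl)).congr_deriv ?_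
    simp only [id, Pi.sub_apply, Pi.pow_apply]
    push_cast
    field_simp
    ring
  have htT : Tendsto (fun ξ : ℝ => Real.tanh (a*ξ)) atTop (𝓝 1) :=
    myTendsto_tanh_atTop.comp (tendsto_id.const_mul_atTop ha)
  have htB : Tendsto (fun ξ : ℝ => Real.tanh (a*ξ)) atBot (𝓝 (-1)) :=
    myTendsto_tanh_atBot.comp (tendsto_id.const_mul_atBot ha)
  have htop : Tendsto
      (fun ξ => ξ * (Real.tanh (a*ξ)^4 - Real.tanh (a*ξ)^2) / 2 - Real.tanh (a*ξ)^3 / (2*a))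
      atTop (𝓝 (-(1/(2*a)))) := by
    have h2 := (htT.pow 3).div_const (2*a)
    have := (myTendsto_term1_atTop ha).sub h2
    simpa using this
  have hbot : Tendsto
      (fun ξ => ξ * (Real.tanh (a*ξ)^4 - Real.tanh (a*ξ)^2) / 2 - Real.tanh (a*ξ)^3 / (2*a))
      atBot (𝓝 (1/(2*a))) := by
    have h2 := (htB.pow 3).div_const (2*a)
    have := (myTendsto_term1_atBot ha).sub h2
    have heq : (0:ℝ) - (-1)^3/(2*a) = 1/(2*a) := by ring
    rwa [heq] at this
  have := integral_of_hasDerivAt_of_tendsto hderiv (myIntegrable ha) hbot htop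
  rw [this]
  field_simp
  ring

theorem fast_jump_stability_integral (v₀ : ℝ) (hv : -1 < v₀) (H₀ : ℝ) :
    let u₀ : ℝ → ℝ := fun ξ => Real.sqrt (1 + v₀) * Real.tanh (Real.sqrt ((1 + v₀) / 2) * ξ)
    let uin : ℝ → ℝ := fun ξ => (u₀ ξ + ξ * deriv u₀ ξ) / (2 * (1 + v₀))
    ∫ ξ : ℝ,
        (2 * (2 * u₀ ξ ^ 2 - 1 - v₀) * u₀ ξ * uin ξ - u₀ ξ ^ 2)
      = -Real.sqrt 2 * Real.sqrt (1 + v₀) := by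
  intro u₀ uin
  have hv1 : (0:ℝ) < 1 + v₀ := by linarith
  set a : ℝ := Real.sqrt ((1 + v₀) / 2) with ha_def
  set s : ℝ := Real.sqrt (1 + v₀) with hs_def
  have ha : 0 < a := Real.sqrt_pos.mpr (by positivity)
  have hs : 0 < s := Real.sqrt_pos.mpr hv1
  have hs2 : s ^ 2 = 1 + v₀ := Real.sq_sqrt hv1.le
  have hu₀ : u₀ = fun ξ => s * Real.tanh (a * ξ) := rfl
  have hd : ∀ ξ, HasDerivAt u₀ (s * ((1 - Real.tanh (a*ξ)^2) * a)) ξ := by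
    intro ξ
    rw [hu₀]
    exact (myHasDerivAt_tanh_comp a ξ).const_mul s
  have hfun : (fun ξ => 2 * (2 * u₀ ξ ^ 2 - 1 - v₀) * u₀ ξ * uin ξ - u₀ ξ ^ 2)
      = fun ξ => s^2 * ((1 - Real.tanh (a*ξ)^2) *
          (a*ξ*(2*Real.tanh (a*ξ)^3 - Real.tanh (a*ξ)) - 2*Real.tanh (a*ξ)^2)) := by
    funext ξ
    have huin : uin ξ = (u₀ ξ + ξ * deriv u₀ ξ) / (2 * (1 + v₀)) := rfl
    rw [huin, (hd ξ).deriv, hu₀]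
    simp only
    have hv2 : v₀ = s^2 - 1 := by linarith [hs2]
    rw [hv2]
    have h2s : (2:ℝ) * (1 + (s^2 - 1)) ≠ 0 := by
      rw [show (1:ℝ) + (s^2 - 1) = s^2 by ring]; positivity
    field_simp
    ring
  rw [hfun]
  rw [MeasureTheory.integral_const_mul, myMainIntegral ha]
  have hsa : s = Real.sqrt 2 * a := by
    rw [hs_def, ha_def, ← Real.sqrt_mul (by norm_num : (0:ℝ) ≤ 2)]
    congr 1
    ring
  calc s^2 * -(1/a) = -((s*s)/a) := by ring
    _ = -((Real.sqrt 2 * a * s)/a) := by nth_rw 1 [hsa]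
    _ = -(Real.sqrt 2 * s) := by field_simp
    _ = -Real.sqrt 2 * s := by ring
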